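/- arXiv:2603.22678 — 6 statements merged into one kernel-verified Lean document; each statement's English description precedes it below -/
import Mathlib

section
/- Let p be a prime, F an algebraically closed field of characteristic p, and let α₁,...,αₙ, β₁,...,βₙ ∈ F be nonzero. Suppose that for all r with 0 ≤ r ≤ n−2 we have Σᵢ αᵢ^(p^r)·βᵢ = 0. If additionally Σᵢ αᵢ^(p^(n−1))·βᵢ = 0, then the elements α₁,...,αₙ are linearly dependent over the prime field 𝔽ₚ. -/
/-- If `α i`, `β i` are nonzero elements of an algebraically closed field `F` of
characteristic `p` and the Moore-type sums `∑ i, α i ^ (p ^ r) * β i` vanish for all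
`r = 0, 1, ..., n - 1`, then `α₁, ..., αₙ` are linearly dependent over the prime field
`𝔽ₚ = ZMod p`. -/
theorem stmt_0 (p : ℕ) [Fact p.Prime] (F : Type*) [Field F] [IsAlgClosed F] [CharP F p]
    (n : ℕ) (hn : 0 < n) (α β : Fin n → F)
    (hα : ∀ i, α i ≠ 0) (hβ : ∀ i, β i ≠ 0)
    (hsum : ∀ r : ℕ, r < n → ∑ i, α i ^ p ^ r * β i = 0) :
    ∃ c : Fin n → ZMod p, c ≠ 0 ∧ ∑ i, (ZMod.cast (c i) : F) * α i = 0 := by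
  classical
  have hp : p.Prime := Fact.out
  have hp1 : 1 < p := hp.one_lt
  by_contra hcon
  push_neg at hcon
  --从 hcon 得到：任何满足求和为 0 的系数向量都是 0
  have hind : ∀ c : Fin n → ZMod p, (∑ i, (ZMod.cast (c i) : F) * α i) = 0 → c = 0 := by
    intro c hc
    by_contra hc0
    exact (hcon c hc0) hc
  -- Moore 矩阵
  set M : Matrix (Fin n) (Fin n) F := fun r i => α i ^ p ^ (r : ℕ) with hM
  have hdet : M.det = 0 := by
    rw [← Matrix.exists_mulVec_eq_zero_iff]
    refine ⟨β, ?_, ?_⟩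
    · intro h
      exact hβ ⟨0, hn⟩ (congrFun h ⟨0, hn⟩)
    · funext r
      simpa [Matrix.mulVec, dotProduct, hM] using hsum r r.isLt
  have hdetT : M.transpose.det = 0 := by rwa [Matrix.det_transpose]
  obtain ⟨c, hc0, hcv⟩ := Matrix.exists_mulVec_eq_zero_iff.mpr hdetT
  -- 对每个 i，∑ r, c r * α i ^ p ^ r = 0
  have hroot : ∀ i, ∑ r : Fin n, c r * α i ^ p ^ (r : ℕ) = 0 := by
    intro i
    have := congrFun hcv i
    simpa [Matrix.mulVec, dotProduct, Matrix.transpose, hM, mul_comm] using this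
  -- 加性映射 G x = ∑ r, c r * x ^ p ^ r
  set G : F → F := fun x => ∑ r : Fin n, c r * x ^ p ^ (r : ℕ) with hG
  have hGadd : ∀ x y, G (x + y) = G x + G y := by
    intro x y
    simp only [hG, add_pow_char_pow, mul_add]
    rw [Finset.sum_add_distrib]
  have hzmod : ∀ (a : ZMod p) (r : ℕ), a ^ p ^ r = a := by
    intro a r
    induction r with
    | zero => simp
    | succ k ih => rw [pow_succ, pow_mul, ih, ZMod.pow_card]
  have hcastpow : ∀ (a : ZMod p) (r : ℕ), (ZMod.cast a : F) ^ p ^ r = (ZMod.cast a : F) := by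
    intro a r
    have h1 := map_pow (ZMod.castHom (dvd_refl p) F) a (p ^ r)
    rw [hzmod] at h1
    simpa [ZMod.castHom_apply] using h1.symm
  have hGsmul : ∀ (a : ZMod p) (x : F), G ((ZMod.cast a : F) * x) = (ZMod.cast a : F) * G x := by
    intro a x
    simp only [hG, mul_pow, Finset.mul_sum, hcastpow]
    refine Finset.sum_congr rfl fun r _ => ?_
    ring
  have hG0 : G 0 = 0 := by
    rw [hG]
    refine Finset.sum_eq_zero fun r _ => ?_
    rw [zero_pow (pow_ne_zero _ hp.pos.ne'), mul_zero]
  -- G 在 α 的 𝔽ₚ-张成上为零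
  have hGspan : ∀ d : Fin n → ZMod p, G (∑ i, (ZMod.cast (d i) : F) * α i) = 0 := by
    intro d
    have key : ∀ s : Finset (Fin n),
        G (∑ i ∈ s, (ZMod.cast (d i) : F) * α i) = 0 := by
      intro s
      induction s using Finset.induction with
      | empty => simpa using hG0
      | @insert a s hx ih =>
        rw [Finset.sum_insert hx, hGadd, ih, add_zero, hGsmul]
        have hGa : G (α a) = 0 := by simp only [hG]; exact hroot a
        rw [hGa, mul_zero]
    exact key Finset.univ
  -- 多项式 g
  set g : Polynomial F := ∑ r : Fin n, Polynomial.C (c r) * Polynomial.X ^ p ^ (r : ℕ) with hg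
  have heval : ∀ x : F, g.eval x = G x := by
    intro x
    simp [hg, hG, Polynomial.eval_finset_sum]
  -- g ≠ 0
  obtain ⟨r0, hr0⟩ : ∃ r0, c r0 ≠ 0 := by
    by_contra h
    push_neg at h
    exact hc0 (funext h)
  have hcoeff : g.coeff (p ^ (r0 : ℕ)) = c r0 := by
    rw [hg, Polynomial.finset_sum_coeff]
    rw [Finset.sum_eq_single r0]
    · simp
    · intro b _ hb
      have hne : ¬ (p ^ (r0 : ℕ) = p ^ (b : ℕ)) := fun h =>
        hb (Fin.ext (Nat.pow_right_injective hp.two_le h)).symm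
      simp [Polynomial.coeff_C_mul, Polynomial.coeff_X_pow, hne]
    · intro h
      exact absurd (Finset.mem_univ r0) h
  have hgne : g ≠ 0 := fun h => hr0 (by simpa [h] using hcoeff.symm)
  -- 次数界
  have hdeg : g.natDegree ≤ p ^ (n - 1) := by
    rw [hg]
    refine (Polynomial.natDegree_sum_le _ _).trans ?_
    rw [Finset.fold_max_le]
    constructor
    · positivity
    · intro r _
      refine (Polynomial.natDegree_C_mul_le _ _).trans ?_
      rw [Polynomial.natDegree_X_pow]
      exact Nat.pow_le_pow_right hp.pos (Nat.le_sub_one_of_lt r.isLt)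
  -- 单射 e : (Fin n → ZMod p) → F
  set e : (Fin n → ZMod p) → F := fun d => ∑ i, (ZMod.cast (d i) : F) * α i with he
  have hinj : Function.Injective e := by
    intro a b hab
    have hcast : ∀ i, (ZMod.cast ((a - b) i) : F) = (ZMod.cast (a i) : F) - ZMod.cast (b i) := by
      intro i
      have := map_sub (ZMod.castHom (dvd_refl p) F) (a i) (b i)
      simpa [ZMod.castHom_apply] using this
    have h2 : ∑ i, (ZMod.cast ((a - b) i) : F) * α i = 0 := by
      simp only [hcast, sub_mul, Finset.sum_sub_distrib]
      rw [show (∑ i, (ZMod.cast (a i) : F) * α i) = e a from rfl,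
        show (∑ i, (ZMod.cast (b i) : F) * α i) = e b from rfl, hab, sub_self]
    exact sub_eq_zero.mp (hind _ h2)
  -- 根的个数矛盾
  have hsub : Finset.univ.image e ⊆ g.roots.toFinset := by
    intro x hx
    obtain ⟨d, _, rfl⟩ := Finset.mem_image.mp hx
    rw [Multiset.mem_toFinset, Polynomial.mem_roots hgne]
    rw [Polynomial.IsRoot, heval]
    exact hGspan d
  have hcard1 : (Finset.univ.image e).card = p ^ n := by
    rw [Finset.card_image_of_injective _ hinj]
    simp [ZMod.card]
  have hle : p ^ n ≤ p ^ (n - 1) := by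
    calc p ^ n = (Finset.univ.image e).card := hcard1.symm
      _ ≤ g.roots.toFinset.card := Finset.card_le_card hsub
      _ ≤ Multiset.card g.roots := g.roots.toFinset_card_le
      _ ≤ g.natDegree := Polynomial.card_roots' g
      _ ≤ p ^ (n - 1) := hdeg
  have : p ^ (n - 1) < p ^ n := Nat.pow_lt_pow_right hp1 (Nat.sub_lt hn one_pos)
  omega
end

section
/- Let p be a prime, F an algebraically closed field of characteristic p, and let α₁,...,αₙ, β₁,...,βₙ ∈ F be nonzero. Suppose Σᵢ αᵢ^(p^r)·βᵢ = 0 for all 0 ≤ r ≤ n−2, but Σᵢ αᵢ^(p^(n−1))·βᵢ ≠ 0. Then α₁,...,αₙ are linearly independent over 𝔽ₚ and β₁,...,βₙ are linearly independent over 𝔽ₚ. -/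
section Aux

variable {p : ℕ} [Fact p.Prime] {F : Type*} [Field F] [CharP F p] {n : ℕ}

/-- The Moore-relation predicate: `l` gives an `F`-linear relation among the
"Frobenius rows" of `x`. -/
def MooreRel (p n : ℕ) (x : Fin n → F) (l : ℕ → F) : Prop :=
  ∀ i, ∑ r ∈ Finset.range n, l r * x i ^ p ^ r = 0

/-- From an `𝔽ₚ`-linear dependence among `x i` we get a nonzero `F`-linear relation
among the Frobenius rows. -/
theorem exists_mooreRel (x : Fin n → F) (c : Fin n → ZMod p) (hc : c ≠ 0)
    (h : ∑ i, (ZMod.cast (c i) : F) * x i = 0) :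
    ∃ l : ℕ → F, (∃ r, r < n ∧ l r ≠ 0) ∧ (∀ r, n ≤ r → l r = 0) ∧ MooreRel p n x l := by
  classical
  let M : Matrix (Fin n) (Fin n) F := Matrix.of fun i r => x i ^ p ^ (r : ℕ)
  have hM : ∀ i r, M i r = x i ^ p ^ (r : ℕ) := fun i r => rfl
  have hcast : ∀ i, ((ZMod.castHom (dvd_refl p) F) (c i) : F) = (ZMod.cast (c i) : F) := by
    intro i; rfl
  have hMT : M.transpose.mulVec (fun i => (ZMod.cast (c i) : F)) = 0 := by
    funext r
    have key : ∀ i, (ZMod.cast (c i) : F) ^ p ^ (r : ℕ) = (ZMod.cast (c i) : F) := by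
      intro i
      rw [← hcast, ← map_pow, ZMod.pow_card_pow, hcast]
    calc M.transpose.mulVec (fun i => (ZMod.cast (c i) : F)) r
        = ∑ i, x i ^ p ^ (r : ℕ) * (ZMod.cast (c i) : F) := by
          simp [M, Matrix.mulVec, Matrix.transpose_apply, dotProduct]
      _ = ∑ i, ((ZMod.cast (c i) : F) * x i) ^ p ^ (r : ℕ) := by
          refine Finset.sum_congr rfl fun i _ => ?_
          rw [mul_pow, key i, mul_comm]
      _ = (∑ i, (ZMod.cast (c i) : F) * x i) ^ p ^ (r : ℕ) := by
          rw [← iterateFrobenius_def (p := p), map_sum]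
          simp [iterateFrobenius_def]
      _ = 0 := by rw [h]; exact zero_pow (pow_ne_zero _ (Fact.out : p.Prime).ne_zero)
  have hdet : M.transpose.det = 0 := by
    rw [← Matrix.exists_mulVec_eq_zero_iff]
    refine ⟨fun i => (ZMod.cast (c i) : F), ?_, hMT⟩
    intro h0
    apply hc
    funext i
    have hi := congrFun h0 i
    have hinj : Function.Injective (ZMod.castHom (dvd_refl p) F) :=
      (ZMod.castHom (dvd_refl p) F).injective
    have : (ZMod.castHom (dvd_refl p) F) (c i) = (ZMod.castHom (dvd_refl p) F) 0 := by
      rw [map_zero, hcast]; exact hi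
    exact hinj this
  have hdet' : M.det = 0 := by rwa [Matrix.det_transpose] at hdet
  obtain ⟨v, hv, hMv⟩ := Matrix.exists_mulVec_eq_zero_iff.mpr hdet'
  refine ⟨fun r => if h : r < n then v ⟨r, h⟩ else 0, ?_, ?_, ?_⟩
  · have : ∃ j, v j ≠ 0 := by
      by_contra hcon
      push_neg at hcon
      exact hv (funext hcon)
    obtain ⟨j, hj⟩ := this
    exact ⟨j, j.isLt, by simpa [j.isLt] using hj⟩
  · intro r hr; simp [Nat.not_lt.mpr hr]
  · intro i
    have hrow := congrFun hMv i
    simp only [M, Matrix.mulVec, dotProduct, Matrix.of_apply, Pi.zero_apply] at hrow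
    rw [← Fin.sum_univ_eq_sum_range
      (fun r => (if h : r < n then v ⟨r, h⟩ else 0) * x i ^ p ^ r) n]
    rw [← hrow]
    refine Finset.sum_congr rfl fun r _ => ?_
    simp [r.isLt, mul_comm]

/-- Shift a Moore relation up by one, provided the top coefficient vanishes. -/
theorem mooreRel_shiftUp (x : Fin n → F) (l : ℕ → F) (hl : MooreRel p n x l)
    (htop : l (n - 1) = 0) (hn : 1 ≤ n) :
    MooreRel p n x (fun r => if r = 0 then 0 else l (r - 1) ^ p) := by
  intro i
  obtain ⟨m, rfl⟩ : ∃ m, n = m + 1 := ⟨n - 1, by omega⟩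
  have e1 : ∑ r ∈ Finset.range (m + 1), (if r = 0 then 0 else l (r - 1) ^ p) * x i ^ p ^ r
      = ∑ r ∈ Finset.range m, (l r * x i ^ p ^ r) ^ p := by
    rw [Finset.sum_range_succ' (fun r => (if r = 0 then 0 else l (r - 1) ^ p) * x i ^ p ^ r) m]
    rw [if_pos rfl, zero_mul, add_zero]
    refine Finset.sum_congr rfl fun r _ => ?_
    rw [if_neg (Nat.succ_ne_zero r), Nat.add_sub_cancel, mul_pow, ← pow_mul, pow_succ]
  have e2 : ∑ r ∈ Finset.range m, (l r * x i ^ p ^ r) ^ p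
      = (∑ r ∈ Finset.range m, l r * x i ^ p ^ r) ^ p := by
    simp_rw [← frobenius_def (R := F) (p := p)]
    exact (map_sum (frobenius F p) _ _).symm
  have hsum0 : ∑ r ∈ Finset.range m, l r * x i ^ p ^ r = 0 := by
    have htop' : l m = 0 := by simpa using htop
    have h := hl i
    rw [Finset.sum_range_succ] at h
    simpa [htop'] using h
  rw [e1, e2, hsum0, zero_pow (Fact.out : p.Prime).ne_zero]

/-- Shift a Moore relation down by one, provided the bottom coefficient vanishes. -/
theorem mooreRel_shiftDown [PerfectRing F p] (x : Fin n → F) (l : ℕ → F)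
    (hl : MooreRel p n x l) (h0 : l 0 = 0) (hsupp : ∀ r, n ≤ r → l r = 0) :
    MooreRel p n x (fun r => (frobeniusEquiv F p).symm (l (r + 1))) := by
  intro i
  apply (frobeniusEquiv F p).injective
  rw [map_zero]
  have : frobeniusEquiv F p (∑ r ∈ Finset.range n,
      (frobeniusEquiv F p).symm (l (r + 1)) * x i ^ p ^ r)
      = ∑ r ∈ Finset.range n, l (r + 1) * x i ^ p ^ (r + 1) := by
    rw [map_sum]
    refine Finset.sum_congr rfl fun r _ => ?_
    rw [frobeniusEquiv_def, mul_pow, frobeniusEquiv_symm_pow_p, ← pow_mul, pow_succ]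
  rw [this]
  have h2 : ∑ r ∈ Finset.range (n + 1), l r * x i ^ p ^ r
      = ∑ r ∈ Finset.range n, l (r + 1) * x i ^ p ^ (r + 1) + l 0 * x i ^ p ^ 0 :=
    Finset.sum_range_succ' _ n
  rw [Finset.sum_range_succ, hl i, hsupp n le_rfl, h0] at h2
  simpa using h2.symm

/-- Normalize a Moore relation so the top coefficient is nonzero. -/
theorem mooreRel_top (x : Fin n → F) (hn : 1 ≤ n) :
    ∀ t (l : ℕ → F), MooreRel p n x l → (∃ r, n - 1 - t ≤ r ∧ r < n ∧ l r ≠ 0) →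
      ∃ μ : ℕ → F, MooreRel p n x μ ∧ μ (n - 1) ≠ 0 := by
  intro t
  induction t with
  | zero =>
    rintro l hl ⟨r, hr1, hr2, hr3⟩
    have : r = n - 1 := by omega
    exact ⟨l, hl, this ▸ hr3⟩
  | succ t ih =>
    rintro l hl ⟨r, hr1, hr2, hr3⟩
    by_cases htop : l (n - 1) ≠ 0
    · exact ⟨l, hl, htop⟩
    · push_neg at htop
      have hrne : r ≠ n - 1 := fun h => hr3 (h ▸ htop)
      refine ih (fun r => if r = 0 then 0 else l (r - 1) ^ p)
        (mooreRel_shiftUp x l hl htop hn) ⟨r + 1, by omega, by omega, ?_⟩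
      show (if r + 1 = 0 then 0 else l (r + 1 - 1) ^ p) ≠ 0
      rw [if_neg (Nat.succ_ne_zero r), Nat.add_sub_cancel]
      exact pow_ne_zero _ hr3

/-- Normalize a Moore relation so the bottom coefficient is nonzero. -/
theorem mooreRel_bot [PerfectRing F p] (x : Fin n → F) :
    ∀ t (l : ℕ → F), MooreRel p n x l → (∀ r, n ≤ r → l r = 0) →
      (∃ r, r ≤ t ∧ l r ≠ 0) →
      ∃ ν : ℕ → F, MooreRel p n x ν ∧ ν 0 ≠ 0 := by
  intro t
  induction t with
  | zero =>
    rintro l hl _ ⟨r, hr1, hr3⟩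
    have : r = 0 := by omega
    exact ⟨l, hl, this ▸ hr3⟩
  | succ t ih =>
    rintro l hl hsupp ⟨r, hr1, hr3⟩
    by_cases h0 : l 0 ≠ 0
    · exact ⟨l, hl, h0⟩
    · push_neg at h0
      have hrne : r ≠ 0 := fun h => hr3 (h ▸ h0)
      refine ih (fun r => (frobeniusEquiv F p).symm (l (r + 1)))
        (mooreRel_shiftDown x l hl h0 hsupp)
        (fun s hs => by
          show (frobeniusEquiv F p).symm (l (s + 1)) = 0
          rw [hsupp (s + 1) (by omega), map_zero]) ⟨r - 1, by omega, ?_⟩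
      show (frobeniusEquiv F p).symm (l (r - 1 + 1)) ≠ 0
      have hr1' : r - 1 + 1 = r := by omega
      rw [hr1']
      intro hbad
      exact hr3 (by simpa using congrArg (frobeniusEquiv F p) hbad)

end Aux

/-- If the Moore-type sums `∑ i, α i ^ (p ^ r) * β i` vanish for `0 ≤ r ≤ n - 2` but not
for `r = n - 1`, then both `α₁, ..., αₙ` and `β₁, ..., βₙ` are linearly independent over
`𝔽ₚ`. -/
theorem stmt_1 (p : ℕ) [Fact p.Prime] (F : Type*) [Field F] [IsAlgClosed F] [CharP F p]
    (n : ℕ) (α β : Fin n → F)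
    (hα : ∀ i, α i ≠ 0) (hβ : ∀ i, β i ≠ 0)
    (hsum : ∀ r : ℕ, r + 2 ≤ n → ∑ i, α i ^ p ^ r * β i = 0)
    (hne : ∑ i, α i ^ p ^ (n - 1) * β i ≠ 0) :
    (∀ c : Fin n → ZMod p, ∑ i, (ZMod.cast (c i) : F) * α i = 0 → c = 0) ∧
    (∀ c : Fin n → ZMod p, ∑ i, (ZMod.cast (c i) : F) * β i = 0 → c = 0) := by
  haveI : ExpChar F p := ExpChar.prime (Fact.out : p.Prime)
  have hn : 1 ≤ n := by
    by_contra h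
    push_neg at h
    interval_cases n
    · simp at hne
  constructor
  · intro c hcsum
    by_contra hc
    obtain ⟨l, ⟨r0, hr0n, hr0⟩, hsupp, hrel⟩ := exists_mooreRel α c hc hcsum
    obtain ⟨μ, hμrel, hμtop⟩ := mooreRel_top α hn (n - 1) l hrel ⟨r0, by omega, hr0n, hr0⟩
    have key : ∑ r ∈ Finset.range n, μ r * (∑ i, α i ^ p ^ r * β i) = 0 := by
      calc ∑ r ∈ Finset.range n, μ r * (∑ i, α i ^ p ^ r * β i)
          = ∑ r ∈ Finset.range n, ∑ i, μ r * α i ^ p ^ r * β i := by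
            simp [Finset.mul_sum, mul_assoc]
        _ = ∑ i, ∑ r ∈ Finset.range n, μ r * α i ^ p ^ r * β i := Finset.sum_comm
        _ = ∑ i : Fin n, (∑ r ∈ Finset.range n, μ r * α i ^ p ^ r) * β i := by
            simp [Finset.sum_mul]
        _ = 0 := by
            refine Finset.sum_eq_zero fun i _ => ?_
            rw [hμrel i, zero_mul]
    have single : ∑ r ∈ Finset.range n, μ r * (∑ i, α i ^ p ^ r * β i)
        = μ (n - 1) * ∑ i, α i ^ p ^ (n - 1) * β i := by
      refine Finset.sum_eq_single_of_mem (n - 1) (Finset.mem_range.mpr (by omega))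
        fun r hr hrne => ?_
      rw [hsum r (by rw [Finset.mem_range] at hr; omega), mul_zero]
    rw [single] at key
    exact hne ((mul_eq_zero.mp key).resolve_left hμtop)
  · intro c hcsum
    by_contra hc
    obtain ⟨l, ⟨r0, hr0n, hr0⟩, hsupp, hrel⟩ := exists_mooreRel β c hc hcsum
    obtain ⟨ν, hνrel, hνbot⟩ := mooreRel_bot β (n - 1) l hrel hsupp ⟨r0, by omega, hr0⟩
    have key : ∑ s ∈ Finset.range n, ν s * (∑ i, α i ^ p ^ (n - 1) * β i ^ p ^ s) = 0 := by
      calc ∑ s ∈ Finset.range n, ν s * (∑ i, α i ^ p ^ (n - 1) * β i ^ p ^ s)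
          = ∑ s ∈ Finset.range n, ∑ i, α i ^ p ^ (n - 1) * (ν s * β i ^ p ^ s) := by
            refine Finset.sum_congr rfl fun s _ => ?_
            rw [Finset.mul_sum]
            exact Finset.sum_congr rfl fun i _ => by ring
        _ = ∑ i, ∑ s ∈ Finset.range n, α i ^ p ^ (n - 1) * (ν s * β i ^ p ^ s) :=
            Finset.sum_comm
        _ = ∑ i : Fin n, α i ^ p ^ (n - 1) * (∑ s ∈ Finset.range n, ν s * β i ^ p ^ s) := by
            simp [Finset.mul_sum]
        _ = 0 := by
            refine Finset.sum_eq_zero fun i _ => ?_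
            rw [hνrel i, mul_zero]
    have inner0 : ∀ s ∈ Finset.range n, s ≠ 0 →
        ∑ i, α i ^ p ^ (n - 1) * β i ^ p ^ s = 0 := by
      intro s hs hs0
      rw [Finset.mem_range] at hs
      have h1 : (∑ i, α i ^ p ^ (n - 1 - s) * β i) ^ p ^ s
          = ∑ i, α i ^ p ^ (n - 1) * β i ^ p ^ s := by
        rw [← iterateFrobenius_def (p := p), map_sum]
        refine Finset.sum_congr rfl fun i _ => ?_
        have hexp : n - 1 - s + s = n - 1 := by omega
        rw [iterateFrobenius_def, mul_pow, ← pow_mul, ← pow_add, hexp]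
      rw [← h1, hsum (n - 1 - s) (by omega), zero_pow (pow_ne_zero _ (Fact.out : p.Prime).ne_zero)]
    have single : ∑ s ∈ Finset.range n, ν s * (∑ i, α i ^ p ^ (n - 1) * β i ^ p ^ s)
        = ν 0 * ∑ i, α i ^ p ^ (n - 1) * β i ^ p ^ 0 := by
      refine Finset.sum_eq_single_of_mem (0 : ℕ) (Finset.mem_range.mpr (by omega))
        fun s hs hsne => ?_
      rw [inner0 s hs hsne, mul_zero]
    rw [single] at key
    simp only [pow_zero, pow_one] at key
    exact hne ((mul_eq_zero.mp key).resolve_left hνbot)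
end

section
/- Let F = 𝔽̄ₚ and let {x₁,...,xₙ, y₁,...,yₙ} be a collection of power series in F[[t]] which is maximal in its Q-isometry class (with respect to the partial order on associated line configurations). Then x₁,...,xₙ are 𝔽ₚ-hyper-independent, and likewise y₁,...,yₙ are 𝔽ₚ-hyper-independent. -/
/-! If an `𝔽ₚ`-combination `∑ cᵢ xᵢ` had order larger than `d = min ord (cᵢ xᵢ)`, the terms of
order exactly `d` would already cancel to order `> d`. Restrict `c` to those terms and let `j` be
one of them with `ord yⱼ` largest. The quantum re-indexing `x' = x B`, `y' = y (B⁻¹)ᵀ`, where `B`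
is the identity with its `j`-th column replaced by `c`, replaces `xⱼ` by `∑ cᵢ xᵢ` and `yᵢ` by
`yᵢ - (cᵢ / cⱼ) yⱼ`. By the choice of `j` no order drops, while the order of the `j`-th
`x`-entry rises, so the line configuration moves strictly up, contradicting maximality. Exchanging
`x` and `y` preserves the `Q`-isometry class, which gives the statement for `y`. -/

open PowerSeries

/-- The admissible line `y = min(v_t x, v_t y) · X + max(v_t x, v_t y)` attached to a pair
of power series, recorded as the pair (slope, intercept) in `ℕ∞ × ℕ∞`. -/
noncomputable def lineOf {F : Type*} [Semiring F] (x y : PowerSeries F) : ℕ∞ × ℕ∞ :=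
  (min x.order y.order, max x.order y.order)

/-- A line is degenerate if its slope or intercept is infinite. -/
def LineDegenerate (L : ℕ∞ × ℕ∞) : Prop := L.1 = ⊤ ∨ L.2 = ⊤

/-- The partial order "Π₁ lies above Π₂" on admissible lines. -/
def LiesAbove (L₁ L₂ : ℕ∞ × ℕ∞) : Prop :=
  (¬ LineDegenerate L₁ ∧ ¬ LineDegenerate L₂ ∧ L₂.1 ≤ L₁.1 ∧ L₂.1 + L₂.2 ≤ L₁.1 + L₁.2) ∨
  (LineDegenerate L₁ ∧ ¬ LineDegenerate L₂) ∨
  (L₁.1 = ⊤ ∧ L₂.1 = ⊤ ∧ L₂.2 ≤ L₁.2) ∨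
  (L₁.2 = ⊤ ∧ L₂.2 = ⊤ ∧ L₂.1 ≤ L₁.1)

/-- One line configuration lies above another. -/
def ConfigLiesAbove {n : ℕ} (C₁ C₂ : Fin n → ℕ∞ × ℕ∞) : Prop :=
  ∀ i, LiesAbove (C₁ i) (C₂ i)

/-- `(x', y')` belongs to the `Q`-isometry class of `(x, y)`: it is obtained from `(x, y)`
by the right action of a matrix in `SO(Q₀)(𝔽ₚ)`, where `Q₀` has Gram matrix
`[[0, Iₙ], [Iₙ, 0]]`. -/
def QIsometric (p : ℕ) {n : ℕ} {F : Type*} [Field F]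
    (x y x' y' : Fin n → PowerSeries F) : Prop :=
  ∃ R : Matrix (Fin n ⊕ Fin n) (Fin n ⊕ Fin n) (ZMod p),
    R.det = 1 ∧
    R.transpose * Matrix.fromBlocks 0 1 1 0 * R = Matrix.fromBlocks 0 1 1 0 ∧
    (∀ i, x' i = ∑ k, (ZMod.cast (R k (Sum.inl i)) : F) • Sum.elim x y k) ∧
    (∀ i, y' i = ∑ k, (ZMod.cast (R k (Sum.inr i)) : F) • Sum.elim x y k)

namespace PowerSeries

variable {R : Type*}

theorem le_order_sum [Semiring R] {ι : Type*} (s : Finset ι) (f : ι → R⟦X⟧) {m : ℕ∞}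
    (h : ∀ i ∈ s, m ≤ (f i).order) : m ≤ (∑ i ∈ s, f i).order :=
  le_order _ _ fun k hk => by
    rw [map_sum]
    exact Finset.sum_eq_zero fun i hi => coeff_of_lt_order k (hk.trans_le (h i hi))

theorem le_order_sum_smul [Semiring R] {ι : Type*} [Fintype ι] (a : ι → R) (f : ι → R⟦X⟧)
    {m : ℕ∞} (h : ∀ i, a i ≠ 0 → m ≤ (f i).order) : m ≤ (∑ i, a i • f i).order := by
  refine le_order_sum _ _ fun i _ => ?_
  by_cases hai : a i = 0
  · simp [hai]
  · exact (h i hai).trans le_order_smul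

theorem lt_order_sum_filter_order_eq [Ring R] {ι : Type*} (s : Finset ι) (f : ι → R⟦X⟧)
    {d : ℕ∞} (hd : ∀ i ∈ s, d ≤ (f i).order) (hlt : d < (∑ i ∈ s, f i).order) :
    d < (∑ i ∈ s.filter fun i => (f i).order = d, f i).order := by
  have hd' : d ≠ ⊤ := hlt.ne_top
  have hrest : d + 1 ≤ (∑ i ∈ s.filter fun i => ¬ (f i).order = d, f i).order :=
    le_order_sum _ _ fun i hi => by
      rw [Finset.mem_filter] at hi
      exact (ENat.add_one_le_iff hd').mpr ((hd i hi.1).lt_of_ne' hi.2)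
  rw [← ENat.add_one_le_iff hd', eq_sub_of_add_eq (Finset.sum_filter_add_sum_filter_not s _ f),
    sub_eq_add_neg]
  exact (le_min ((ENat.add_one_le_iff hd').mpr hlt) (by rwa [order_neg])).trans
    (min_order_le_order_add _ _)

end PowerSeries

section Lines

variable {R : Type*} [Semiring R] {x y x' y' : R⟦X⟧}

theorem lineOf_comm (x y : R⟦X⟧) : lineOf x y = lineOf y x := by
  rw [lineOf, lineOf, min_comm, max_comm]

theorem liesAbove_lineOf_of_order_le (hx : x.order ≤ x'.order) (hy : y.order ≤ y'.order) :
    LiesAbove (lineOf x' y') (lineOf x y) := by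
  have hmin : min x.order y.order ≤ min x'.order y'.order := min_le_min hx hy
  have hmax : max x.order y.order ≤ max x'.order y'.order := max_le_max hx hy
  by_cases htop : max x.order y.order = ⊤
  · exact .inr <| .inr <| .inr ⟨top_le_iff.mp (htop ▸ hmax), htop, hmin⟩
  have hnd : ¬ LineDegenerate (lineOf x y) := by
    rintro (h | h)
    · exact htop (top_le_iff.mp (h ▸ min_le_max))
    · exact htop h
  by_cases hd : LineDegenerate (lineOf x' y')
  · exact .inr <| .inl ⟨hd, hnd⟩
  refine .inl ⟨hd, hnd, hmin, ?_⟩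
  simp only [lineOf, min_add_max]
  exact add_le_add hx hy

theorem lineOf_ne_of_order_lt (hx : x.order < x'.order) (hy : y.order ≤ y'.order) :
    lineOf x' y' ≠ lineOf x y := by
  intro h
  simp only [lineOf, Prod.mk.injEq, min_def, max_def] at h
  split_ifs at h <;> grind

end Lines

section QIsometry

variable {p n : ℕ} {F : Type*} [Field F]

theorem QIsometric.swap {x y x' y' : Fin n → F⟦X⟧} (h : QIsometric p y x x' y') :
    QIsometric p x y y' x' := by
  obtain ⟨R, hdet, horth, hx', hy'⟩ := h
  let σ := Equiv.sumComm (Fin n) (Fin n)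
  have hJ : (Matrix.fromBlocks 0 1 1 0 : Matrix (Fin n ⊕ Fin n) (Fin n ⊕ Fin n) (ZMod p)).submatrix
      σ σ = Matrix.fromBlocks 0 1 1 0 := by
    ext (i | i) (k | k) <;> simp [σ]
  refine ⟨R.submatrix σ σ, by rwa [Matrix.det_submatrix_equiv_self], ?_, fun i => ?_, fun i => ?_⟩
  · rw [Matrix.transpose_submatrix, ← hJ, Matrix.submatrix_mul_equiv, Matrix.submatrix_mul_equiv,
      horth]
  · rw [hy', ← Equiv.sum_comp σ]
    exact Finset.sum_congr rfl fun k _ => by rcases k with k | k <;> simp [σ]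
  · rw [hx', ← Equiv.sum_comp σ]
    exact Finset.sum_congr rfl fun k _ => by rcases k with k | k <;> simp [σ]

theorem qIsometric_of_mul_eq_one (x y : Fin n → F⟦X⟧) {B C : Matrix (Fin n) (Fin n) (ZMod p)}
    (hCB : C * B = 1) :
    QIsometric p x y (fun i => ∑ k, (ZMod.cast (B k i) : F) • x k)
      (fun i => ∑ k, (ZMod.cast (C i k) : F) • y k) := by
  refine ⟨Matrix.fromBlocks B 0 0 C.transpose, ?_, ?_, fun i => ?_, fun i => ?_⟩
  · rw [Matrix.det_fromBlocks_zero₂₁, Matrix.det_transpose, mul_comm, ← Matrix.det_mul, hCB,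
      Matrix.det_one]
  · simp [Matrix.fromBlocks_transpose, Matrix.fromBlocks_multiply, ← Matrix.transpose_mul, hCB]
  · simp [Fintype.sum_sum_type]
  · simp [Fintype.sum_sum_type]

end QIsometry

theorem Matrix.updateCol_one_inv_mul_updateCol_one {K ι : Type*} [Field K] [Fintype ι]
    [DecidableEq ι] (c : ι → K) {j : ι} (hcj : c j ≠ 0) :
    updateCol 1 j (Function.update (-(c j)⁻¹ • c) j (c j)⁻¹) * updateCol 1 j c = 1 := by
  set C : Matrix ι ι K := updateCol 1 j (Function.update (-(c j)⁻¹ • c) j (c j)⁻¹)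
  have hC : ∀ i k, k ≠ j → k ≠ i → C i k = 0 := fun i k hkj hki => by
    simp [C, updateCol_ne hkj, one_apply_ne' hki]
  have hCc : C.mulVec c = fun i => (1 : Matrix ι ι K) i j := by
    ext i
    rw [mulVec, dotProduct, Fintype.sum_eq_add_sum_compl j]
    rcases eq_or_ne i j with rfl | hij
    · rw [Finset.sum_eq_zero fun k hk => by rw [hC i k (by simpa using hk) (by simpa using hk),
        zero_mul]]
      simp [C, inv_mul_cancel₀ hcj]
    · rw [Finset.sum_eq_single_of_mem i (by simpa using hij) fun k hk hki => by
        rw [hC i k (by simpa using hk) hki, zero_mul]]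
      simp [C, hij]
      field_simp
      ring
  rw [mul_updateCol, Matrix.mul_one, hCc, updateCol_idem, updateCol_eq_self]

section Maximal

variable {p n : ℕ} {F : Type*} [Field F]

def IsQMaximal (p : ℕ) (x y : Fin n → F⟦X⟧) : Prop :=
  ∀ x' y' : Fin n → F⟦X⟧, QIsometric p x y x' y' →
    ConfigLiesAbove (fun i => lineOf (x' i) (y' i)) (fun i => lineOf (x i) (y i)) →
    (fun i => lineOf (x' i) (y' i)) = fun i => lineOf (x i) (y i)

def IsHyperIndependent (p : ℕ) (x : Fin n → F⟦X⟧) : Prop :=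
  ∀ c : Fin n → ZMod p, (∑ i, (ZMod.cast (c i) : F) • x i).order
    = Finset.univ.inf fun i => ((ZMod.cast (c i) : F) • x i).order

variable {x y : Fin n → F⟦X⟧}

theorem IsQMaximal.swap (h : IsQMaximal p x y) : IsQMaximal p y x := by
  intro x' y' hQ hle
  have hline := h y' x' hQ.swap fun i => by
    simpa only [lineOf_comm (y' i), lineOf_comm (x i)] using hle i
  funext i
  rw [lineOf_comm, congrFun hline i, lineOf_comm]

theorem IsQMaximal.not_order_lt (h : IsQMaximal p x y) {x' y' : Fin n → F⟦X⟧}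
    (hQ : QIsometric p x y x' y') (hx : ∀ i, (x i).order ≤ (x' i).order)
    (hy : ∀ i, (y i).order ≤ (y' i).order) (i : Fin n) : ¬ (x i).order < (x' i).order :=
  fun hlt => lineOf_ne_of_order_lt hlt (hy i) <|
    congrFun (h x' y' hQ fun k => liesAbove_lineOf_of_order_le (hx k) (hy k)) i

theorem IsQMaximal.order_sum_le [Fact p.Prime] (h : IsQMaximal p x y) (c : Fin n → ZMod p)
    {j : Fin n} (hcj : c j ≠ 0) (hy : ∀ i, c i ≠ 0 → (y i).order ≤ (y j).order) :
    (∑ i, (ZMod.cast (c i) : F) • x i).order ≤ (x j).order := by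
  classical
  set B : Matrix (Fin n) (Fin n) (ZMod p) := Matrix.updateCol 1 j c
  have cast_ne_zero {a : ZMod p} (ha : (ZMod.cast a : F) ≠ 0) : a ≠ 0 := by
    rintro rfl; exact ha ZMod.cast_zero
  have hxj : ∑ k, (ZMod.cast (B k j) : F) • x k = ∑ k, (ZMod.cast (c k) : F) • x k := by
    simp [B]
  refine not_lt.mp fun hlt => h.not_order_lt
    (qIsometric_of_mul_eq_one x y (Matrix.updateCol_one_inv_mul_updateCol_one c hcj)) ?_ ?_ j
    (by rwa [hxj])
  · intro i
    rcases eq_or_ne i j with rfl | hij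
    · exact hxj ▸ hlt.le
    refine le_order_sum_smul _ _ fun k hk => ?_
    have : k = i := by simpa [B, Matrix.updateCol_ne hij, Matrix.one_apply] using cast_ne_zero hk
    rw [this]
  · intro i
    refine le_order_sum_smul _ _ fun k hk => ?_
    have hCik := cast_ne_zero hk
    rcases eq_or_ne k j with rfl | hkj
    · rcases eq_or_ne i k with rfl | hik
      · rfl
      exact hy i fun hci => hCik (by simp [hik, hci])
    · have : i = k := by simpa [Matrix.updateCol_ne hkj, Matrix.one_apply] using hCik
      rw [this]

theorem IsQMaximal.isHyperIndependent [Fact p.Prime] (h : IsQMaximal p x y) :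
    IsHyperIndependent p x := by
  classical
  intro c
  set f := fun i => (ZMod.cast (c i) : F) • x i
  set d := Finset.univ.inf fun i => (f i).order
  refine le_antisymm (not_lt.mp fun hlt => ?_) (le_order_sum _ _ fun i hi => Finset.inf_le hi)
  have hne : (Finset.univ : Finset (Fin n)).Nonempty := by
    by_contra h0
    exact hlt.ne_top (by simp [d, Finset.not_nonempty_iff_eq_empty.mp h0])
  obtain ⟨i₀, -, hi₀⟩ := Finset.exists_mem_eq_inf _ hne fun i => (f i).order
  let S := Finset.univ.filter fun i => (f i).order = d
  obtain ⟨j, hjS, hjmax⟩ := S.exists_max_image (fun i => (y i).order) ⟨i₀, by simp [S, d, hi₀]⟩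
  have hjd : (f j).order = d := (Finset.mem_filter.mp hjS).2
  have hcj : c j ≠ 0 := by
    rintro h0
    exact hlt.ne_top (by simp [← hjd, f, h0])
  let c' := fun i => if i ∈ S then c i else 0
  have hc' : ∑ i, (ZMod.cast (c' i) : F) • x i = ∑ i ∈ S, f i := by
    rw [Finset.sum_filter]
    refine Finset.sum_congr rfl fun i _ => ?_
    simp only [c', S, Finset.mem_filter, Finset.mem_univ, true_and]
    split_ifs <;> simp [f]
  have hle := h.order_sum_le c' (j := j) (by simpa [c', hjS]) fun i hi =>
    hjmax i (by by_contra hiS; simp [c', hiS] at hi)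
  have : d < d := calc
    d < (∑ i ∈ S, f i).order :=
      lt_order_sum_filter_order_eq _ f (fun i _ => Finset.inf_le (Finset.mem_univ i)) hlt
    _ ≤ (x j).order := hc' ▸ hle
    _ ≤ (f j).order := le_order_smul
    _ = d := hjd
  exact this.false

end Maximal

theorem stmt_5_general (p : ℕ) [Fact p.Prime] (F : Type*) [Field F]
    (n : ℕ) (x y : Fin n → PowerSeries F)
    (hmax : ∀ x' y' : Fin n → PowerSeries F, QIsometric p x y x' y' →
      ConfigLiesAbove (fun i => lineOf (x' i) (y' i)) (fun i => lineOf (x i) (y i)) →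
      (fun i => lineOf (x' i) (y' i)) = fun i => lineOf (x i) (y i)) :
    (∀ c : Fin n → ZMod p,
        (∑ i, (ZMod.cast (c i) : F) • x i).order
          = Finset.univ.inf fun i => ((ZMod.cast (c i) : F) • x i).order) ∧
    (∀ c : Fin n → ZMod p,
        (∑ i, (ZMod.cast (c i) : F) • y i).order
          = Finset.univ.inf fun i => ((ZMod.cast (c i) : F) • y i).order) :=
  have h : IsQMaximal p x y := hmax
  ⟨h.isHyperIndependent, h.swap.isHyperIndependent⟩

/-- If a collection `{x₁, ..., xₙ, y₁, ..., yₙ}` of power series is maximal in its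
`Q`-isometry class (no member of the class has line configuration strictly above its own),
then `x₁, ..., xₙ` are `𝔽ₚ`-hyper-independent, and likewise `y₁, ..., yₙ`. -/
theorem stmt_5 (p : ℕ) [Fact p.Prime] (F : Type*) [Field F] [IsAlgClosed F] [CharP F p]
    (n : ℕ) (x y : Fin n → PowerSeries F)
    (hmax : ∀ x' y' : Fin n → PowerSeries F, QIsometric p x y x' y' →
      ConfigLiesAbove (fun i => lineOf (x' i) (y' i)) (fun i => lineOf (x i) (y i)) →
      (fun i => lineOf (x' i) (y' i)) = fun i => lineOf (x i) (y i)) :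
    (∀ c : Fin n → ZMod p,
        (∑ i, (ZMod.cast (c i) : F) • x i).order
          = Finset.univ.inf fun i => ((ZMod.cast (c i) : F) • x i).order) ∧
    (∀ c : Fin n → ZMod p,
        (∑ i, (ZMod.cast (c i) : F) • y i).order
          = Finset.univ.inf fun i => ((ZMod.cast (c i) : F) • y i).order) :=
  stmt_5_general p F n x y hmax
end

section
/- Let p ≥ 3, n > a+1 ≥ 2 be integers, and let c₁ ≤ ... ≤ cₙ, d₁ ≥ ... ≥ dₙ be nonnegative integers with cₙ = dₙ, satisfying p^(n−1−i)(cᵢ₊₁−cᵢ) ≤ dᵢ − dᵢ₊₁ for 1 ≤ i ≤ n−1, and h ≥ p^a·c₁ + d₁. Set D₀ = dₙ + p^(n−1)c₁ + Σ_{i=1}^{n−1} p^(n−i−1)(cᵢ₊₁−cᵢ). Then D₀ + (p−1)(cₙ−c₁) + (p−1)dₙ ≤ p^(n−(a+1))·h. -/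
/-- The "thick case" estimate: with `cᵢ` nondecreasing, `dᵢ` nonincreasing, `cₙ = dₙ`,
`p^(n-1-i)(cᵢ₊₁ - cᵢ) ≤ dᵢ - dᵢ₊₁` for `1 ≤ i ≤ n-1` and `h ≥ p^a·c₁ + d₁`, one has
`D₀ + (p-1)(cₙ - c₁) + (p-1)dₙ ≤ p^(n-(a+1))·h`, where
`D₀ = dₙ + p^(n-1)c₁ + ∑_{i=1}^{n-1} p^(n-i-1)(cᵢ₊₁ - cᵢ)`. -/
theorem stmt_11 (p : ℕ) (hp : 3 ≤ p) (a n : ℕ) (ha : 1 ≤ a) (hn : a + 1 < n)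
    (c d : ℕ → ℕ)
    (hc : ∀ i, 1 ≤ i → i < n → c i ≤ c (i + 1))
    (hd : ∀ i, 1 ≤ i → i < n → d (i + 1) ≤ d i)
    (hcd : c n = d n)
    (hrec : ∀ i, 1 ≤ i → i ≤ n - 1 →
      p ^ (n - 1 - i) * (c (i + 1) - c i) ≤ d i - d (i + 1))
    (h : ℕ) (hh : p ^ a * c 1 + d 1 ≤ h) :
    (d n + p ^ (n - 1) * c 1 + ∑ i ∈ Finset.Ico 1 n, p ^ (n - i - 1) * (c (i + 1) - c i))
        + (p - 1) * (c n - c 1) + (p - 1) * d n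
      ≤ p ^ (n - (a + 1)) * h := by
  have hp1 : 1 ≤ p := by omega
  have hm1 : 1 ≤ n - (a + 1) := by omega
  -- Lemma A: d n + ∑_{i=k}^{n-1} p^(n-i-1)(c(i+1)-c i) ≤ d k
  have lemA : ∀ j k, k + j = n → 1 ≤ k →
      d n + ∑ i ∈ Finset.Ico k n, p ^ (n - i - 1) * (c (i + 1) - c i) ≤ d k := by
    intro j
    induction j with
    | zero =>
      intro k hk _
      have : k = n := by omega
      subst this
      simp
    | succ j ih =>
      intro k hk h1
      have hkn : k < n := by omega
      have hr := hrec k h1 (by omega)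
      have hsub : n - 1 - k = n - k - 1 := by omega
      rw [hsub] at hr
      have hdk := hd k h1 hkn
      have hstep := ih (k + 1) (by omega) (by omega)
      rw [Finset.sum_eq_sum_Ico_succ_bot hkn]
      calc d n + (p ^ (n - k - 1) * (c (k + 1) - c k)
            + ∑ i ∈ Finset.Ico (k + 1) n, p ^ (n - i - 1) * (c (i + 1) - c i))
          = p ^ (n - k - 1) * (c (k + 1) - c k)
            + (d n + ∑ i ∈ Finset.Ico (k + 1) n, p ^ (n - i - 1) * (c (i + 1) - c i)) := by
            ring
        _ ≤ (d k - d (k + 1)) + d (k + 1) := Nat.add_le_add hr hstep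
        _ = d k := by omega
  -- Lemma B: c k ≤ c 1 + ∑_{i=1}^{k-1} (c(i+1) - c i)
  have lemB : ∀ k, 1 ≤ k → k ≤ n → c k ≤ c 1 + ∑ i ∈ Finset.Ico 1 k, (c (i + 1) - c i) := by
    intro k h1 hk
    induction k, h1 using Nat.le_induction with
    | base => simp
    | succ k hk1 ih =>
      have hkn : k < n := by omega
      have := hc k hk1 hkn
      have ihk := ih (by omega)
      rw [Finset.sum_Ico_succ_top hk1]
      omega
  -- termwise : S + (p-1)*T ≤ p*S
  have hST : (∑ i ∈ Finset.Ico 1 n, p ^ (n - i - 1) * (c (i + 1) - c i))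
      + (p - 1) * (∑ i ∈ Finset.Ico 1 n, (c (i + 1) - c i))
      ≤ p * (∑ i ∈ Finset.Ico 1 n, p ^ (n - i - 1) * (c (i + 1) - c i)) := by
    rw [Finset.mul_sum, Finset.mul_sum, ← Finset.sum_add_distrib]
    apply Finset.sum_le_sum
    intro i _
    have hx : 1 ≤ p ^ (n - i - 1) := Nat.one_le_pow _ _ (by omega)
    have h1 : (p - 1) * (c (i + 1) - c i) ≤ (p - 1) * (p ^ (n - i - 1) * (c (i + 1) - c i)) :=
      Nat.mul_le_mul_left _ (Nat.le_mul_of_pos_left _ (by omega))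
    have h2 : p * (p ^ (n - i - 1) * (c (i + 1) - c i))
        = p ^ (n - i - 1) * (c (i + 1) - c i)
          + (p - 1) * (p ^ (n - i - 1) * (c (i + 1) - c i)) := by
      have hpe : p = p - 1 + 1 := by omega
      nth_rewrite 1 [hpe]
      ring
    omega
  have hA := lemA (n - 1) 1 (by omega) le_rfl
  have hcT : (p - 1) * (c n - c 1) ≤ (p - 1) * (∑ i ∈ Finset.Ico 1 n, (c (i + 1) - c i)) := by
    apply Nat.mul_le_mul_left
    have := lemB n (by omega) le_rfl
    omega
  have hpm : p ≤ p ^ (n - (a + 1)) := by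
    calc p = p ^ 1 := (pow_one p).symm
    _ ≤ p ^ (n - (a + 1)) := Nat.pow_le_pow_right hp1 hm1
  have f2 : p * d n = d n + (p - 1) * d n := by
    have hpe : p = p - 1 + 1 := by omega
    nth_rewrite 1 [hpe]
    ring
  have f3 : p * d n ≤ p ^ (n - (a + 1)) * d n := Nat.mul_le_mul_right _ hpm
  have f4 : p * (∑ i ∈ Finset.Ico 1 n, p ^ (n - i - 1) * (c (i + 1) - c i))
      ≤ p ^ (n - (a + 1)) * (∑ i ∈ Finset.Ico 1 n, p ^ (n - i - 1) * (c (i + 1) - c i)) :=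
    Nat.mul_le_mul_right _ hpm
  have f5 : p ^ (n - (a + 1)) * (d n + ∑ i ∈ Finset.Ico 1 n, p ^ (n - i - 1) * (c (i + 1) - c i))
      = p ^ (n - (a + 1)) * d n
        + p ^ (n - (a + 1)) * (∑ i ∈ Finset.Ico 1 n, p ^ (n - i - 1) * (c (i + 1) - c i)) :=
    mul_add _ _ _
  have f6 : p ^ (n - (a + 1)) * (d n + ∑ i ∈ Finset.Ico 1 n, p ^ (n - i - 1) * (c (i + 1) - c i))
      ≤ p ^ (n - (a + 1)) * d 1 := Nat.mul_le_mul_left _ hA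
  have f7 : p ^ (n - (a + 1)) * (p ^ a * c 1) = p ^ (n - 1) * c 1 := by
    rw [← mul_assoc, ← pow_add]
    congr 2
    omega
  have f8 : p ^ (n - (a + 1)) * (p ^ a * c 1 + d 1) ≤ p ^ (n - (a + 1)) * h :=
    Nat.mul_le_mul_left _ hh
  have f9 : p ^ (n - (a + 1)) * (p ^ a * c 1 + d 1)
      = p ^ (n - (a + 1)) * (p ^ a * c 1) + p ^ (n - (a + 1)) * d 1 := mul_add _ _ _
  omega
end

section
/- Let {Πᵢ : y = aᵢx + bᵢ}_{1≤i≤n} be a finite configuration of geometric lines with aᵢ, bᵢ ∈ ℝ≥0, and let Ω = ∩ᵢ {(x,y) : y ≤ aᵢx + bᵢ}. If w distinct lines ℓ₁,...,ℓ_w occur with multiplicities m₁,...,m_w (Σmⱼ = n), and each ℓⱼ contains at most mⱼ − 1 'edge-like' boundary points from a given finite set S of points on ∂Ω (points lying on exactly one of the lines ℓⱼ), while each 'vertex-like' point of S lies on at least two distinct lines, then |S| ≤ (w − 1) + Σⱼ (mⱼ − 1) = (Σⱼ mⱼ) − 1 = n − 1. -/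
open scoped Classical

/-- The abstract counting argument for line configurations: if `w` distinct lines occur
with multiplicities `mⱼ` (summing to `n`), `S` is a finite set of points on the boundary
of the region `Ω` below all the lines, every point of `S` lies on at least one line, and
each line `ℓⱼ` contains at most `mⱼ - 1` edge-like points of `S` (points lying on exactly
one line), then `|S| ≤ (w - 1) + ∑ⱼ (mⱼ - 1)`. -/
theorem stmt_16 (w n : ℕ) (ℓ : Fin w → ℝ × ℝ) (hinj : Function.Injective ℓ)
    (mult : Fin w → ℕ) (hm : ∀ j, 1 ≤ mult j) (hsum : ∑ j, mult j = n)
    (S : Finset (ℝ × ℝ))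
    (hS : ∀ q ∈ S, q ∈ frontier {q : ℝ × ℝ | ∀ j, q.2 ≤ (ℓ j).1 * q.1 + (ℓ j).2})
    (hcover : ∀ q ∈ S, ∃ j, q.2 = (ℓ j).1 * q.1 + (ℓ j).2)
    (hedge : ∀ j, (S.filter fun q => q.2 = (ℓ j).1 * q.1 + (ℓ j).2 ∧
        ∀ j', q.2 = (ℓ j').1 * q.1 + (ℓ j').2 → j' = j).card ≤ mult j - 1) :
    S.card ≤ (w - 1) + ∑ j, (mult j - 1) := by
  classical
  set a : Fin w → ℝ := fun j => (ℓ j).1 with ha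
  set b : Fin w → ℝ := fun j => (ℓ j).2 with hb
  -- every point of S lies below all lines
  have hbelow : ∀ q ∈ S, ∀ j, q.2 ≤ a j * q.1 + b j := by
    have hcl : IsClosed {q : ℝ × ℝ | ∀ j, q.2 ≤ (ℓ j).1 * q.1 + (ℓ j).2} := by
      have heq : {q : ℝ × ℝ | ∀ j, q.2 ≤ (ℓ j).1 * q.1 + (ℓ j).2}
          = ⋂ j, {q : ℝ × ℝ | q.2 ≤ (ℓ j).1 * q.1 + (ℓ j).2} := by
        ext q; simp
      rw [heq]
      exact isClosed_iInter fun j =>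
        isClosed_le continuous_snd ((continuous_const.mul continuous_fst).add continuous_const)
    intro q hq j
    exact hcl.frontier_subset (hS q hq) j
  -- edge-like predicate
  set edP : Fin w → ℝ × ℝ → Prop := fun j q => q.2 = a j * q.1 + b j ∧
      ∀ j', q.2 = a j' * q.1 + b j' → j' = j with hedP
  set V : Finset (ℝ × ℝ) := S.filter (fun q => ¬ ∃ j, edP j q) with hV
  set E : Finset (ℝ × ℝ) := S.filter (fun q => ∃ j, edP j q) with hE
  have hsplit : S.card ≤ V.card + E.card := by
    have hsub : S ⊆ V ∪ E := by
      intro q hq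
      rw [Finset.mem_union, hV, hE, Finset.mem_filter, Finset.mem_filter]
      by_cases h : ∃ j, edP j q
      · exact Or.inr ⟨hq, h⟩
      · exact Or.inl ⟨hq, h⟩
    exact le_trans (Finset.card_le_card hsub) (Finset.card_union_le V E)
  -- bound on edge-like points
  have hEcard : E.card ≤ ∑ j, (mult j - 1) := by
    have hsub : E ⊆ Finset.univ.biUnion (fun j => S.filter (fun q => edP j q)) := by
      intro q hq
      rw [hE, Finset.mem_filter] at hq
      obtain ⟨hqS, j, hj⟩ := hq
      exact Finset.mem_biUnion.mpr ⟨j, Finset.mem_univ j, Finset.mem_filter.mpr ⟨hqS, hj⟩⟩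
    calc E.card ≤ (Finset.univ.biUnion (fun j => S.filter (fun q => edP j q))).card :=
          Finset.card_le_card hsub
      _ ≤ ∑ j, (S.filter (fun q => edP j q)).card := Finset.card_biUnion_le
      _ ≤ ∑ j, (mult j - 1) := Finset.sum_le_sum (fun j _ => hedge j)
  -- bound on vertex-like points
  have hVcard : V.card ≤ w - 1 := by
    rcases Finset.eq_empty_or_nonempty V with hVe | hVne
    · simp [hVe]
    have hVS : V ⊆ S := Finset.filter_subset _ _
    -- w > 0
    obtain ⟨q₁, hq₁⟩ := hVne
    obtain ⟨j₁, -⟩ := hcover q₁ (hVS hq₁)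
    haveI : Nonempty (Fin w) := ⟨j₁⟩
    -- each vertex point lies on two lines with distinct slopes
    have hTwo : ∀ q ∈ V, ∃ i i', q.2 = a i * q.1 + b i ∧ q.2 = a i' * q.1 + b i' ∧
        a i < a i' := by
      intro q hq
      rw [hV, Finset.mem_filter] at hq
      obtain ⟨hqS, hne⟩ := hq
      obtain ⟨j, hj⟩ := hcover q hqS
      have hne2 : ∃ j', q.2 = a j' * q.1 + b j' ∧ j' ≠ j := by
        by_contra hcon
        push_neg at hcon
        exact hne ⟨j, hj, fun j' h => hcon j' h⟩
      obtain ⟨j', hj', hjj'⟩ := hne2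
      have hane : a j ≠ a j' := by
        intro hEq
        apply hjj'
        apply hinj
        symm
        have e1 : q.2 = a j * q.1 + b j := hj
        have hb' : b j = b j' := by
          rw [hEq] at e1
          linarith [hj']
        exact Prod.ext hEq hb'
      rcases lt_or_gt_of_ne hane with h | h
      · exact ⟨j, j', hj, hj', h⟩
      · exact ⟨j', j, hj', hj, h⟩
    -- the crossing lemma: slopes decrease as x increases
    have cross : ∀ q ∈ V, ∀ q' ∈ V, ∀ i i', q.2 = a i * q.1 + b i →
        q'.2 = a i' * q'.1 + b i' → q.1 < q'.1 → a i' ≤ a i := by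
      intro q hq q' hq' i i' hi hi' hlt
      have h1 := hbelow q (hVS hq) i'
      have h2 := hbelow q' (hVS hq') i
      nlinarith [h1, h2, hi, hi', hlt]
    -- distinct vertex points have distinct x-coordinates
    have hxinj : ∀ q ∈ V, ∀ q' ∈ V, q.1 = q'.1 → q = q' := by
      intro q hq q' hq' hx
      obtain ⟨i, -, hi, -, -⟩ := hTwo q hq
      obtain ⟨i', -, hi', -, -⟩ := hTwo q' hq'
      have h1 := hbelow q (hVS hq) i'
      have h2 := hbelow q' (hVS hq') i
      have hy : q.2 = q'.2 := by rw [hx] at hi h1; linarith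
      exact Prod.ext hx hy
    -- choose max- and min-slope lines through each vertex point
    have hMaxEx : ∀ q ∈ V, ∃ i, q.2 = a i * q.1 + b i ∧
        ∀ i', q.2 = a i' * q.1 + b i' → a i' ≤ a i := by
      intro q hq
      obtain ⟨i₀, -, hi₀, -, -⟩ := hTwo q hq
      obtain ⟨i, hi, hmax⟩ := Finset.exists_max_image
        (Finset.univ.filter (fun i => q.2 = a i * q.1 + b i)) a
        ⟨i₀, by simp [hi₀]⟩
      rw [Finset.mem_filter] at hi
      exact ⟨i, hi.2, fun i' hi' => hmax i' (Finset.mem_filter.mpr ⟨Finset.mem_univ _, hi'⟩)⟩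
    have hMinEx : ∀ q ∈ V, ∃ i, q.2 = a i * q.1 + b i ∧
        ∀ i', q.2 = a i' * q.1 + b i' → a i ≤ a i' := by
      intro q hq
      obtain ⟨i₀, -, hi₀, -, -⟩ := hTwo q hq
      obtain ⟨i, hi, hmin⟩ := Finset.exists_min_image
        (Finset.univ.filter (fun i => q.2 = a i * q.1 + b i)) a
        ⟨i₀, by simp [hi₀]⟩
      rw [Finset.mem_filter] at hi
      exact ⟨i, hi.2, fun i' hi' => hmin i' (Finset.mem_filter.mpr ⟨Finset.mem_univ _, hi'⟩)⟩
    choose! φ hφ hφmax using hMaxEx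
    choose! ψ hψ hψmin using hMinEx
    have hlt : ∀ q ∈ V, a (ψ q) < a (φ q) := by
      intro q hq
      obtain ⟨i, i', hi, hi', hii'⟩ := hTwo q hq
      exact lt_of_le_of_lt (hψmin q hq i hi) (lt_of_lt_of_le hii' (hφmax q hq i' hi'))
    -- vertex point with maximal x-coordinate
    obtain ⟨q₀, hq₀, hq₀max⟩ := Finset.exists_max_image V (fun q => q.1) ⟨q₁, hq₁⟩
    -- key: a (ψ q₀) < a (φ q) for all q ∈ V
    have hkey : ∀ q ∈ V, a (ψ q₀) < a (φ q) := by
      intro q hq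
      rcases eq_or_ne q q₀ with rfl | hne
      · exact hlt q hq
      have hx : q.1 < q₀.1 := by
        rcases lt_trichotomy q.1 q₀.1 with h | h | h
        · exact h
        · exact absurd (hxinj q hq q₀ hq₀ h) hne
        · exact absurd (hq₀max q hq) (not_le.mpr h)
      have h1 : a (φ q₀) ≤ a (ψ q) := cross q hq q₀ hq₀ (ψ q) (φ q₀)
        (hψ q hq) (hφ q₀ hq₀) hx
      have h2 : a (ψ q) ≤ a (φ q) := hφmax q hq (ψ q) (hψ q hq)
      linarith [hlt q₀ hq₀]
    -- F := slope of max line is injective on V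
    have hFinj : Set.InjOn (fun q => a (φ q)) V := by
      intro q hq q' hq' hEq
      simp only at hEq
      by_contra hne
      have hx : q.1 ≠ q'.1 := fun h => hne (hxinj q hq q' hq' h)
      rcases hx.lt_or_gt with h | h
      · have h1 : a (φ q') ≤ a (ψ q) := cross q hq q' hq' (ψ q) (φ q')
          (hψ q hq) (hφ q' hq') h
        have := hlt q hq; linarith [hEq.ge]
      · have h1 : a (φ q) ≤ a (ψ q') := cross q' hq' q hq (ψ q') (φ q)
          (hψ q' hq') (hφ q hq) h
        have := hlt q' hq'; linarith [hEq.le]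
    -- build the slope set
    have hnotmem : a (ψ q₀) ∉ V.image (fun q => a (φ q)) := by
      rw [Finset.mem_image]
      rintro ⟨q, hq, hEq⟩
      exact absurd hEq (ne_of_lt (hkey q hq)).symm
    have hcard1 : (insert (a (ψ q₀)) (V.image (fun q => a (φ q)))).card = V.card + 1 := by
      rw [Finset.card_insert_of_notMem hnotmem, Finset.card_image_of_injOn hFinj]
    have hsubW : insert (a (ψ q₀)) (V.image (fun q => a (φ q))) ⊆
        Finset.univ.image a := by
      intro x hx
      rw [Finset.mem_insert] at hx
      rcases hx with rfl | hx
      · exact Finset.mem_image.mpr ⟨ψ q₀, Finset.mem_univ _, rfl⟩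
      · obtain ⟨q, -, rfl⟩ := Finset.mem_image.mp hx
        exact Finset.mem_image.mpr ⟨φ q, Finset.mem_univ _, rfl⟩
    have : V.card + 1 ≤ w := by
      calc V.card + 1 = (insert (a (ψ q₀)) (V.image (fun q => a (φ q)))).card := hcard1.symm
        _ ≤ (Finset.univ.image a).card := Finset.card_le_card hsubW
        _ ≤ (Finset.univ : Finset (Fin w)).card := Finset.card_image_le
        _ = w := Finset.card_univ.trans (Fintype.card_fin w)
    omega
  calc S.card ≤ V.card + E.card := hsplit
    _ ≤ (w - 1) + ∑ j, (mult j - 1) := Nat.add_le_add hVcard hEcard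
end

section
/- Let p be an odd prime and consider F = 𝔽̄ₚ[[x₁,...,xₘ,y₁,...,yₘ]]. Define Q_r = Σ_{k=1}^m (xₖ·yₖ^(p^r) + xₖ^(p^r)·yₖ) for r ≥ 0. Then for the substitution xᵢ ↦ αᵢt, yᵢ ↦ βᵢt (αᵢ, βᵢ ∈ 𝔽̄ₚ), if Q_r vanishes under this substitution for all 0 ≤ r ≤ m−1, then Q_r vanishes under this substitution for every r ≥ 0; equivalently, if Σᵢ(αᵢ^(p^r)βᵢ + αᵢβᵢ^(p^r)) = 0 for 0 ≤ r ≤ m−1 then the same holds for all r ≥ 0. -/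
namespace Stmt19

open Matrix Equiv

variable {F : Type*} [Field F] {m : ℕ} (p : ℕ) (α β : Fin m → F)

noncomputable def u (r : ℕ) : Fin m ⊕ Fin m → F :=
  Sum.elim (fun i => α i ^ p ^ r) (fun i => β i ^ p ^ r)

def form (x y : Fin m ⊕ Fin m → F) : F :=
  ∑ i : Fin m, (x (Sum.inl i) * y (Sum.inr i) + x (Sum.inr i) * y (Sum.inl i))

def Bf (r : ℕ) : F := ∑ i, (α i ^ p ^ r * β i + α i * β i ^ p ^ r)

lemma form_comm (x y : Fin m ⊕ Fin m → F) : form x y = form y x := by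
  unfold form; apply Finset.sum_congr rfl; intros; ring

lemma form_sum_right (x : Fin m ⊕ Fin m → F) (t : Fin m ⊕ Fin m → F)
    (v : Fin m ⊕ Fin m → Fin m ⊕ Fin m → F) :
    form x (fun k => ∑ j, t j * v j k) = ∑ j, t j * form x (v j) := by
  unfold form
  simp only [Finset.mul_sum, Finset.sum_mul, ← Finset.sum_add_distrib]
  rw [Finset.sum_comm]
  apply Finset.sum_congr rfl
  intros i _
  apply Finset.sum_congr rfl
  intros; ring

lemma form_u [Fact p.Prime] [CharP F p] (t s : ℕ) :
    form (u p α β (t + s)) (u p α β t) = Bf p α β s ^ p ^ t := by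
  have h : Bf p α β s ^ p ^ t = iterateFrobenius F p t (Bf p α β s) := rfl
  rw [h, Bf, map_sum]
  unfold form u
  apply Finset.sum_congr rfl
  intro i _
  simp only [Sum.elim_inl, Sum.elim_inr, map_add, _root_.map_mul, iterateFrobenius_def, ← pow_mul,
    ← pow_add]
  rw [add_comm s t]
  ring

section Main

variable [Fact p.Prime] [CharP F p]

lemma ppos : 0 < p := Nat.Prime.pos Fact.out


lemma finRotate_val' {n : ℕ} (x : Fin n) : ((finRotate n) x : ℕ) = ((x : ℕ) + 1) % n := by
  obtain ⟨k, rfl⟩ : ∃ k, n = k + 1 := ⟨n - 1, by have := x.pos; omega⟩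
  rw [finRotate_succ_apply, Fin.add_def, Fin.val_one']
  rcases Nat.eq_zero_or_pos k with hk | hk
  · subst hk; omega
  · rw [Nat.mod_eq_of_lt (show 1 < k + 1 by omega)]

lemma rotate_perm (m : ℕ) (hm : 0 < m) :
    ∃ ρ : Equiv.Perm (Fin m ⊕ Fin m),
      Equiv.Perm.sign ρ = (-1 : ℤˣ) ∧
      ρ (Sum.inr ⟨m - 1, by omega⟩) = Sum.inl ⟨0, hm⟩ ∧
      ∀ j, j ≠ Sum.inr ⟨m - 1, by omega⟩ →
        Sum.elim (fun a : Fin m => (a : ℕ)) (fun a : Fin m => m + (a : ℕ)) (ρ j) =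
        Sum.elim (fun a : Fin m => (a : ℕ)) (fun a : Fin m => m + (a : ℕ)) j + 1 := by
  refine ⟨finSumFinEquiv.symm.permCongr (finRotate (m + m)), ?_, ?_, ?_⟩
  · rw [Equiv.Perm.sign_permCongr]
    have h2m : m + m = (m + m - 1) + 1 := by omega
    rw [h2m, sign_finRotate, Odd.neg_one_pow ⟨m - 1, by omega⟩]
  · rw [Equiv.permCongr_apply, Equiv.symm_symm]
    have h1 : finRotate (m + m) (finSumFinEquiv (Sum.inr (⟨m - 1, by omega⟩ : Fin m))) =
        Fin.castAdd m ⟨0, hm⟩ := by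
      apply Fin.ext
      rw [finRotate_val', finSumFinEquiv_apply_right]
      simp only [Fin.coe_natAdd, Fin.coe_castAdd]
      rw [show m + (m - 1) + 1 = m + m by omega, Nat.mod_self]
    rw [h1, finSumFinEquiv_symm_apply_castAdd]
  · intro j hj
    rw [Equiv.permCongr_apply, Equiv.symm_symm]
    cases j with
    | inl a =>
      by_cases ha : (a : ℕ) + 1 < m
      · have h1 : finRotate (m + m) (finSumFinEquiv (Sum.inl a)) =
            Fin.castAdd m ⟨(a : ℕ) + 1, ha⟩ := by
          apply Fin.ext
          rw [finRotate_val', finSumFinEquiv_apply_left]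
          simp only [Fin.coe_castAdd]
          rw [Nat.mod_eq_of_lt (by omega)]
        rw [h1, finSumFinEquiv_symm_apply_castAdd]
        simp
      · have ha2 : (a : ℕ) + 1 = m := by have := a.isLt; omega
        have h1 : finRotate (m + m) (finSumFinEquiv (Sum.inl a)) =
            Fin.natAdd m ⟨0, by omega⟩ := by
          apply Fin.ext
          rw [finRotate_val', finSumFinEquiv_apply_left]
          simp only [Fin.coe_castAdd, Fin.coe_natAdd]
          rw [Nat.mod_eq_of_lt (by omega)]
          omega
        rw [h1, finSumFinEquiv_symm_apply_natAdd]
        simp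
        omega
    | inr a =>
      have haL : (a : ℕ) ≠ m - 1 := by
        intro h
        exact hj (congrArg Sum.inr (Fin.ext (by simpa using h)))
      have h1 : finRotate (m + m) (finSumFinEquiv (Sum.inr a)) =
          Fin.natAdd m ⟨(a : ℕ) + 1, by have := a.isLt; omega⟩ := by
        apply Fin.ext
        rw [finRotate_val', finSumFinEquiv_apply_right]
        simp only [Fin.coe_natAdd]
        rw [Nat.mod_eq_of_lt (by have := a.isLt; omega)]
        omega
      rw [h1, finSumFinEquiv_symm_apply_natAdd]
      simp
      omega

lemma KZ {r : ℕ} (hz : ∀ s, s < r → Bf p α β s = 0) {a b : ℕ} (hab : a ≤ b) (h : b - a < r) :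
    form (u p α β b) (u p α β a) = 0 := by
  rw [show b = a + (b - a) by omega, form_u, hz _ (by omega),
    zero_pow (pow_ne_zero _ (ppos p).ne')]

lemma main_step (hp2 : (2 : F) ≠ 0) (hpne2 : p ≠ 2) (r : ℕ) (hrm : m ≤ r) (hm0 : m ≠ 0)
    (hz : ∀ s, s < r → Bf p α β s = 0) : Bf p α β r = 0 := by
  by_contra hb
  set b : F := Bf p α β r with hbdef
  set ι : Fin m ⊕ Fin m → ℕ := Sum.elim (fun a => (a : ℕ)) (fun a => r + (a : ℕ)) with hι
  set w : Fin m ⊕ Fin m → Fin m ⊕ Fin m → F := fun j => u p α β (ι j) with hw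
  set P : Matrix (Fin m ⊕ Fin m) (Fin m ⊕ Fin m) F := Matrix.of (fun j i => w j i) with hP
  set σs : Equiv.Perm (Fin m ⊕ Fin m) := Equiv.sumComm (Fin m) (Fin m) with hσs
  set J : Matrix (Fin m ⊕ Fin m) (Fin m ⊕ Fin m) F :=
    (1 : Matrix (Fin m ⊕ Fin m) (Fin m ⊕ Fin m) F).submatrix σs id with hJ
  set Bb : Matrix (Fin m) (Fin m) F :=
    Matrix.of (fun a c : Fin m => Bf p α β (r + (c : ℕ) - (a : ℕ)) ^ p ^ (a : ℕ)) with hBb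
  set Cb : Matrix (Fin m) (Fin m) F :=
    Matrix.of (fun a c : Fin m => Bf p α β (r + (a : ℕ) - (c : ℕ)) ^ p ^ (c : ℕ)) with hCb
  set G : Matrix (Fin m ⊕ Fin m) (Fin m ⊕ Fin m) F := Matrix.fromBlocks 0 Bb Cb 0 with hG
  set N : ℕ := ∑ j ∈ Finset.range m, p ^ j with hN
  -- the Gram identity
  have hPJP : ∀ i j, (P * J * Pᵀ) i j = form (w i) (w j) := by
    intro i j
    rw [Matrix.mul_assoc, Matrix.mul_apply]
    have hinner : ∀ k, (J * Pᵀ) k j = w j (σs k) := by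
      intro k
      rw [Matrix.mul_apply]
      simp [hJ, Matrix.one_apply, Finset.sum_ite_eq, Matrix.of_apply, Matrix.transpose_apply]
      rfl
    simp only [hinner]
    rw [Fintype.sum_sum_type]
    unfold form
    rw [Finset.sum_add_distrib]
    rfl
  have hGram : G = P * J * Pᵀ := by
    ext i j
    rw [hPJP]
    have hform : ∀ (a : ℕ) (c : ℕ), a < m → form (u p α β a) (u p α β (r + c)) =
        Bf p α β (r + c - a) ^ p ^ a := by
      intro a c ha
      have h2 := form_u p α β a (r + c - a)
      rw [show a + (r + c - a) = r + c by omega] at h2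
      rw [form_comm, h2]
    cases i with
    | inl a =>
      cases j with
      | inl c =>
        rw [hG, Matrix.fromBlocks_apply₁₁]
        have h1 : w (Sum.inl a) = u p α β (a : ℕ) := rfl
        have h2 : w (Sum.inl c) = u p α β (c : ℕ) := rfl
        rw [h1, h2, Matrix.zero_apply]
        rcases le_total (a : ℕ) (c : ℕ) with h | h
        · rw [form_comm, KZ p α β hz h (by have := c.isLt; omega)]
        · rw [KZ p α β hz h (by have := a.isLt; omega)]
      | inr c =>
        rw [hG, Matrix.fromBlocks_apply₁₂]
        have h1 : w (Sum.inl a) = u p α β (a : ℕ) := rfl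
        have h2 : w (Sum.inr c) = u p α β (r + (c : ℕ)) := rfl
        rw [h1, h2, hBb, Matrix.of_apply, hform a c a.isLt]
    | inr a =>
      cases j with
      | inl c =>
        rw [hG, Matrix.fromBlocks_apply₂₁]
        have h1 : w (Sum.inr a) = u p α β (r + (a : ℕ)) := rfl
        have h2 : w (Sum.inl c) = u p α β (c : ℕ) := rfl
        have h3 := form_u p α β (c : ℕ) (r + (a : ℕ) - (c : ℕ))
        rw [show (c : ℕ) + (r + (a : ℕ) - (c : ℕ)) = r + (a : ℕ) by
          have := c.isLt; omega] at h3
        rw [h1, h2, hCb, Matrix.of_apply, h3]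
      | inr c =>
        rw [hG, Matrix.fromBlocks_apply₂₂]
        have h1 : w (Sum.inr a) = u p α β (r + (a : ℕ)) := rfl
        have h2 : w (Sum.inr c) = u p α β (r + (c : ℕ)) := rfl
        rw [h1, h2, Matrix.zero_apply]
        rcases le_total (a : ℕ) (c : ℕ) with h | h
        · rw [form_comm, KZ p α β hz (by omega) (by have := c.isLt; omega)]
        · rw [KZ p α β hz (by omega) (by have := a.isLt; omega)]
  -- determinants of the triangular blocks
  have hdiag : ∀ a : Fin m, Bf p α β (r + (a : ℕ) - (a : ℕ)) = b := by
    intro a; rw [show r + (a : ℕ) - (a : ℕ) = r by omega]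
  have hBbtri : Bb.BlockTriangular id := by
    intro i j hij
    rw [hBb, Matrix.of_apply, hz (r + (j : ℕ) - (i : ℕ)) (by simp [id] at hij; omega),
      zero_pow (pow_ne_zero _ (ppos p).ne')]
  have hCbtri : Cb.BlockTriangular OrderDual.toDual := by
    intro i j hij
    have hij' : (i : ℕ) < (j : ℕ) := hij
    rw [hCb, Matrix.of_apply, hz (r + (i : ℕ) - (j : ℕ)) (by omega),
      zero_pow (pow_ne_zero _ (ppos p).ne')]
  have hprodN : ∏ a : Fin m, b ^ p ^ (a : ℕ) = b ^ N := by
    rw [Finset.prod_pow_eq_pow_sum, hN, Fin.sum_univ_eq_sum_range]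
  have hdetBb : Bb.det = b ^ N := by
    rw [Matrix.det_of_upperTriangular hBbtri, ← hprodN]
    exact Finset.prod_congr rfl fun a _ => by rw [hBb, Matrix.of_apply, hdiag a]
  have hdetCb : Cb.det = b ^ N := by
    rw [Matrix.det_of_lowerTriangular Cb hCbtri, ← hprodN]
    exact Finset.prod_congr rfl fun a _ => by rw [hCb, Matrix.of_apply, hdiag a]
  have hdetJ : J.det = ((Perm.sign σs : ℤ) : F) := by
    rw [hJ, Matrix.det_permute, Matrix.det_one, mul_one]
  have hdetG1 : G.det = ((Perm.sign σs : ℤ) : F) * (P.det * P.det) := by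
    rw [hGram, Matrix.det_mul, Matrix.det_mul, Matrix.det_transpose, hdetJ]; ring
  have hdetG2 : ((Perm.sign σs : ℤ) : F) * G.det = b ^ N * b ^ N := by
    rw [← Matrix.det_permute σs G, hG]
    have hcoe : (⇑σs : Fin m ⊕ Fin m → Fin m ⊕ Fin m) = Sum.swap := rfl
    rw [hcoe, Matrix.fromBlocks_submatrix_sum_swap_left, Matrix.submatrix_id_id,
      Matrix.det_fromBlocks_zero₂₁, hdetBb, hdetCb]
  have hsign2 : ((Perm.sign σs : ℤ) : F) * ((Perm.sign σs : ℤ) : F) = 1 := by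
    rcases Int.units_eq_one_or (Perm.sign σs) with h | h <;> rw [h] <;> norm_num
  have hdd : P.det * P.det = b ^ N * b ^ N := by
    rw [hdetG1, ← mul_assoc, hsign2, one_mul] at hdetG2
    exact hdetG2
  have hdne : P.det ≠ 0 := by
    intro h
    rw [h, mul_zero] at hdd
    exact (mul_ne_zero (pow_ne_zero _ hb) (pow_ne_zero _ hb)) hdd.symm
  have hPtu : IsUnit Pᵀ.det := by
    rw [Matrix.det_transpose]; exact isUnit_iff_ne_zero.mpr hdne
  -- every vector is a linear combination of the w's
  have hspan : ∀ y : Fin m ⊕ Fin m → F, ∃ t : Fin m ⊕ Fin m → F, y = fun i => ∑ j, t j * w j i := by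
    intro y
    refine ⟨(Pᵀ)⁻¹ *ᵥ y, ?_⟩
    have h1 : Pᵀ *ᵥ ((Pᵀ)⁻¹ *ᵥ y) = y := by
      rw [Matrix.mulVec_mulVec, Matrix.mul_nonsing_inv _ hPtu, Matrix.one_mulVec]
    conv_lhs => rw [← h1]
    funext i
    rw [Matrix.mulVec, dotProduct]
    exact Finset.sum_congr rfl fun j _ => by rw [Matrix.transpose_apply]; exact mul_comm _ _
  -- case split
  rcases lt_or_eq_of_le hrm with hlt | heq
  · -- r > m : the vector u m is orthogonal to everything, hence zero
    have horth : ∀ j, form (u p α β m) (w j) = 0 := by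
      intro j
      cases j with
      | inl a =>
        have h1 : w (Sum.inl a) = u p α β (a : ℕ) := rfl
        rw [h1]
        exact KZ p α β hz a.isLt.le (by have := a.isLt; omega)
      | inr a =>
        have h1 : w (Sum.inr a) = u p α β (r + (a : ℕ)) := rfl
        rw [h1, form_comm]
        exact KZ p α β hz (by omega) (by have := a.isLt; omega)
    have hall : ∀ y, form (u p α β m) y = 0 := by
      intro y
      obtain ⟨t, rfl⟩ := hspan y
      rw [form_sum_right]
      simp [horth]
    have hα : ∀ i, α i = 0 := by
      intro i
      have h1 := hall (Pi.single (Sum.inr i) (1 : F))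
      have h2 : form (u p α β m) (Pi.single (Sum.inr i) (1 : F)) = α i ^ p ^ m := by
        unfold form u
        simp [Pi.single_apply]
      rw [h2] at h1
      exact pow_eq_zero_iff (pow_ne_zero m (ppos p).ne') |>.mp h1
    apply hb
    rw [hbdef, Bf]
    apply Finset.sum_eq_zero
    intro i _
    rw [hα i, zero_pow (pow_ne_zero _ (ppos p).ne'), zero_mul, zero_mul, add_zero]
  · -- r = m : the Frobenius-determinant contradiction
    have hrm2 : r = m := heq.symm
    set L : Fin m := ⟨m - 1, by omega⟩ with hL
    set z : Fin m := ⟨0, by omega⟩ with hz0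
    obtain ⟨ρ, hsignρ0, hρL0, hιρ0⟩ := rotate_perm m (by omega)
    have hρL : ρ (Sum.inr L) = Sum.inl z := by rw [hL, hz0]; exact hρL0
    have hιm : ∀ j, ι j =
        Sum.elim (fun a : Fin m => (a : ℕ)) (fun a : Fin m => m + (a : ℕ)) j := by
      intro j; cases j <;> simp [hι, hrm2]
    have hιρ : ∀ j, j ≠ Sum.inr L → ι (ρ j) = ι j + 1 := by
      intro j hj
      rw [hιm, hιm, hιρ0 j (by rw [hL] at hj; exact hj)]
    have hsignρ : ((Equiv.Perm.sign ρ : ℤ) : F) = -1 := by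
      rw [hsignρ0]; norm_num
    -- the coordinates of u (r + m) in the basis w
    obtain ⟨c, hc⟩ := hspan (u p α β (r + m))
    -- value of the leading coordinate
    have hczb : c (Sum.inl z) * b = b ^ p ^ m := by
      have h1 : form (u p α β (r + m)) (u p α β m) = b ^ p ^ m := by
        have h2 := form_u p α β m r
        rw [show m + r = r + m by omega] at h2
        rw [h2, hbdef, hrm2]
      rw [hc, form_comm, form_sum_right] at h1
      rw [← h1]
      rw [Finset.sum_eq_single (Sum.inl z)]
      · have hwz : w (Sum.inl z) = u p α β 0 := by
          rw [hw]; simp [hι, hz0]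
        rw [hwz]
        have h3 := form_u p α β 0 m
        rw [zero_add] at h3
        rw [h3, pow_zero, pow_one, hbdef, hrm2]
      · intro j _ hjz
        cases j with
        | inl a =>
          have ha : (a : ℕ) ≠ 0 := by
            intro h
            exact hjz (by rw [hz0]; exact congrArg Sum.inl (Fin.ext (by simpa using h)))
          have hwa : w (Sum.inl a) = u p α β (a : ℕ) := rfl
          rw [hwa, KZ p α β hz a.isLt.le (by have := a.isLt; omega), mul_zero]
        | inr a =>
          have hwa : w (Sum.inr a) = u p α β (r + (a : ℕ)) := rfl
          rw [hwa, form_comm, KZ p α β hz (by omega) (by have := a.isLt; omega), mul_zero]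
      · intro h
        exact absurd (Finset.mem_univ _) h
    -- the Frobenius twist of P
    have hfrobP : (frobenius F p).mapMatrix P = Matrix.of (fun j i => u p α β (ι j + 1) i) := by
      ext j i
      rw [RingHom.mapMatrix_apply, Matrix.map_apply, Matrix.of_apply, frobenius_def]
      have hPji : P j i = u p α β (ι j) i := rfl
      rw [hPji]
      cases i with
      | inl k =>
        show (α k ^ p ^ ι j) ^ p = α k ^ p ^ (ι j + 1)
        rw [← pow_mul, pow_succ]
      | inr k =>
        show (β k ^ p ^ ι j) ^ p = β k ^ p ^ (ι j + 1)
        rw [← pow_mul, pow_succ]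
    -- identify the twisted matrix with an updated row-permuted matrix
    have hQR : (frobenius F p).mapMatrix P =
        (P.submatrix ρ id).updateRow (Sum.inr L) (u p α β (r + m)) := by
      ext j i
      rw [hfrobP, Matrix.of_apply]
      by_cases hj : j = Sum.inr L
      · subst hj
        rw [Matrix.updateRow_self]
        have hιL : ι (Sum.inr L) + 1 = r + m := by simp [hι, hL]; omega
        rw [hιL]
      · rw [Matrix.updateRow_ne hj]
        show u p α β (ι j + 1) i = P (ρ j) (id i)
        have h1 : P (ρ j) (id i) = u p α β (ι (ρ j)) i := rfl
        rw [h1, hιρ j hj]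
    -- determinant computation
    have hdetfrob : P.det ^ p = c (Sum.inl z) * (((Equiv.Perm.sign ρ : ℤ) : F) * P.det) := by
      have h1 : (frobenius F p) P.det = ((frobenius F p).mapMatrix P).det :=
        RingHom.map_det (frobenius F p) P
      rw [frobenius_def] at h1
      rw [h1, hQR]
      have hcomb : u p α β (r + m) = ∑ k, c (ρ k) • (P.submatrix ρ id) k := by
        funext i
        rw [Finset.sum_apply]
        have h2 : ∀ k : Fin m ⊕ Fin m,
            (c (ρ k) • (P.submatrix (⇑ρ) id) k) i = c (ρ k) * w (ρ k) i := fun k => rfl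
        simp only [h2]
        rw [hc]
        exact (Equiv.sum_comp ρ (fun j => c j * w j i)).symm
      rw [hcomb, Matrix.det_updateRow_sum, hρL, smul_eq_mul, Matrix.det_permute]
    -- final contradiction
    have hevenp : Even (p - 1) := by
      have hodd : Odd p := (Fact.out : p.Prime).odd_of_ne_two hpne2
      obtain ⟨k, hk⟩ := hodd
      exact ⟨k, by omega⟩
    have hNp : N * (p - 1) = p ^ m - 1 := by
      have h1 : 1 ≤ p := ppos p
      have h2 : 1 ≤ p ^ m := Nat.one_le_pow _ _ (ppos p)
      zify [h1, h2]
      rw [hN]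
      push_cast
      exact geom_sum_mul _ _
    have hdpow : P.det ^ (p - 1) = b ^ (p ^ m - 1) := by
      have hcases : P.det = b ^ N ∨ P.det = -(b ^ N) := by
        rcases mul_self_eq_mul_self_iff.mp hdd with h | h
        · exact Or.inl h
        · exact Or.inr h
      rcases hcases with h | h
      · rw [h, ← pow_mul, hNp]
      · rw [h, hevenp.neg_pow, ← pow_mul, hNp]
    have hcz : c (Sum.inl z) = b ^ (p ^ m - 1) := by
      have h2 : b ^ p ^ m = b ^ (p ^ m - 1) * b := by
        rw [← pow_succ]
        congr 1
        have := Nat.one_le_pow m p (ppos p)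
        omega
      rw [h2] at hczb
      exact mul_right_cancel₀ hb hczb
    have h3 : P.det ^ p = P.det ^ (p - 1) * P.det := by
      rw [← pow_succ]
      congr 1
      have := ppos p
      omega
    rw [h3, hdpow, hcz, hsignρ] at hdetfrob
    have h2z : (2 : F) * (b ^ (p ^ m - 1) * P.det) = 0 := by linear_combination hdetfrob
    rcases mul_eq_zero.mp h2z with h | h
    · exact hp2 h
    · rcases mul_eq_zero.mp h with h' | h'
      · exact pow_ne_zero _ hb h'
      · exact hdne h'

end Main
end Stmt19

/-- If `α i, β i ∈ 𝔽̄ₚ` (possibly zero, `p` odd) satisfy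
`∑ i (α i ^ (p^r)·β i + α i·β i ^ (p^r)) = 0` for all `0 ≤ r ≤ m - 1`, then the same
holds for every `r ≥ 0`. -/
theorem stmt_19 (p : ℕ) [Fact p.Prime] (hp : p ≠ 2)
    (F : Type*) [Field F] [IsAlgClosed F] [CharP F p]
    (m : ℕ) (α β : Fin m → F)
    (hsum : ∀ r : ℕ, r < m → ∑ i, (α i ^ p ^ r * β i + α i * β i ^ p ^ r) = 0) :
    ∀ r : ℕ, ∑ i, (α i ^ p ^ r * β i + α i * β i ^ p ^ r) = 0 := by
  intro r
  induction r using Nat.strong_induction_on with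
  | _ r IH =>
    rcases lt_or_ge r m with h | h
    · exact hsum r h
    · rcases Nat.eq_zero_or_pos m with hm | hm
      · subst hm
        simp
      · have hp2F : (2 : F) ≠ 0 := by
          intro h2
          rw [show (2 : F) = ((2 : ℕ) : F) by norm_num] at h2
          rw [CharP.cast_eq_zero_iff F p 2] at h2
          exact hp ((Nat.prime_dvd_prime_iff_eq Fact.out Nat.prime_two).mp h2)
        exact Stmt19.main_step p α β hp2F hp r h hm.ne' (fun s hs => IH s hs)
end
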